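/- arXiv:1701.08417 — 2 statements merged into one kernel-verified Lean document; each statement's English description precedes it below -/
import Mathlib

section
/- A finite simple graph G is ωh-perfect (i.e., for every induced subgraph H of G the Hadwiger number of H equals the clique number of H) if and only if G is chordal. -/
open SimpleGraph

/-- A `k`-coloring `c` of `G` is *complete* if it is surjective and for every pair of distinct
colors there is an edge of `G` whose endpoints receive those two colors. -/
def IsCompleteColoring {V : Type*} (G : SimpleGraph V) {k : ℕ} (c : V → Fin k) : Prop :=
  Function.Surjective c ∧
    ∀ i j : Fin k, i ≠ j → ∃ u v : V, G.Adj u v ∧ c u = i ∧ c v = j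

/-- A coloring is *proper* if adjacent vertices receive distinct colors. -/
def IsProperColoring {V : Type*} (G : SimpleGraph V) {k : ℕ} (c : V → Fin k) : Prop :=
  ∀ u v : V, G.Adj u v → c u ≠ c v

/-- A `k`-coloring `c` of `G` is *dominating* if it is surjective and every color class contains
a vertex having a neighbor in every other color class. -/
def IsDominatingColoring {V : Type*} (G : SimpleGraph V) {k : ℕ} (c : V → Fin k) : Prop :=
  Function.Surjective c ∧
    ∀ i : Fin k, ∃ v : V, c v = i ∧ ∀ j : Fin k, j ≠ i → ∃ u : V, G.Adj v u ∧ c u = j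

/-- A `k`-coloring `c` of `G` is *pseudo-Grundy* if it is surjective and every vertex is
adjacent to at least one vertex of each smaller color. -/
def IsPseudoGrundyColoring {V : Type*} (G : SimpleGraph V) {k : ℕ} (c : V → Fin k) : Prop :=
  Function.Surjective c ∧
    ∀ v : V, ∀ j : Fin k, j < c v → ∃ u : V, G.Adj v u ∧ c u = j

/-- The pseudoachromatic number `ψ(G)`: the largest `k` admitting a complete `k`-coloring. -/
noncomputable def pseudoachromaticNumber {V : Type*} (G : SimpleGraph V) : ℕ :=
  sSup {k | ∃ c : V → Fin k, IsCompleteColoring G c}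

/-- The achromatic number `α(G)`: the largest `k` admitting a proper complete `k`-coloring. -/
noncomputable def achromaticNumber {V : Type*} (G : SimpleGraph V) : ℕ :=
  sSup {k | ∃ c : V → Fin k, IsProperColoring G c ∧ IsCompleteColoring G c}

/-- The b-chromatic number `b(G)`: the largest `k` admitting a proper dominating `k`-coloring. -/
noncomputable def bChromaticNumber {V : Type*} (G : SimpleGraph V) : ℕ :=
  sSup {k | ∃ c : V → Fin k, IsProperColoring G c ∧ IsDominatingColoring G c}

/-- The pseudo-b-chromatic number `B(G)`: the largest `k` admitting a dominating `k`-coloring. -/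
noncomputable def pseudoBChromaticNumber {V : Type*} (G : SimpleGraph V) : ℕ :=
  sSup {k | ∃ c : V → Fin k, IsDominatingColoring G c}

/-- The Grundy number `Γ(G)`: the largest `k` admitting a proper pseudo-Grundy `k`-coloring. -/
noncomputable def grundyNumber {V : Type*} (G : SimpleGraph V) : ℕ :=
  sSup {k | ∃ c : V → Fin k, IsProperColoring G c ∧ IsPseudoGrundyColoring G c}

/-- The pseudo-Grundy number `γ(G)`: the largest `k` admitting a pseudo-Grundy `k`-coloring. -/
noncomputable def pseudoGrundyNumber {V : Type*} (G : SimpleGraph V) : ℕ :=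
  sSup {k | ∃ c : V → Fin k, IsPseudoGrundyColoring G c}

/-- `G` contains the complete graph `K_k` as a minor: there are `k` pairwise disjoint
"branch sets", each inducing a connected (nonempty) subgraph, with an edge of `G` between
every two of them. -/
def HasCompleteMinor {V : Type*} (G : SimpleGraph V) (k : ℕ) : Prop :=
  ∃ B : Fin k → Set V,
    (∀ i, (G.induce (B i)).Connected) ∧
    (∀ i j : Fin k, i ≠ j → Disjoint (B i) (B j)) ∧
    (∀ i j : Fin k, i ≠ j → ∃ u ∈ B i, ∃ v ∈ B j, G.Adj u v)

/-- The Hadwiger number `h(G)`: the largest `k` such that `K_k` is a minor of `G`. -/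
noncomputable def hadwigerNumber {V : Type*} (G : SimpleGraph V) : ℕ :=
  sSup {k | HasCompleteMinor G k}

/-- `G` has an induced subgraph isomorphic to `H`. -/
def HasInducedCopy {V : Type*} {W : Type*} (G : SimpleGraph V) (H : SimpleGraph W) : Prop :=
  ∃ s : Set V, Nonempty (G.induce s ≃g H)

/-- A graph is *chordal* if it has no induced cycle on four or more vertices. -/
def IsChordal {V : Type*} (G : SimpleGraph V) : Prop :=
  ∀ n : ℕ, 4 ≤ n → ¬ HasInducedCopy G (cycleGraph n)

/-- The diamond graph `D`: `K₄` minus one edge. -/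
def diamondGraph : SimpleGraph (Fin 4) :=
  (⊤ : SimpleGraph (Fin 4)).deleteEdges {s(0, 1)}

/-!
An induced cycle `C_n` with `n ≥ 4` has clique number `2` but contains `K_3` as a minor (keep two
adjacent vertices and contract the remaining path), so an ωh-perfect graph is chordal.

Conversely, Dirac's lemma says that a chordal graph is complete or has two nonadjacent simplicial
vertices. Indeed, an inclusion-minimal separator `S` of two nonadjacent vertices is a clique: two
nonadjacent vertices of `S` have neighbours in the components of both sides, and shortest paths
through the two components close up to an induced cycle of length at least four. Induction applies
to each side together with `S`. Now take a model of a `K_k` minor and a simplicial vertex `v`.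
Either some branch set is `{v}`, and then `v` together with a neighbour in every other branch set
is a `k`-clique; or `v` can be deleted from its branch set, which stays connected and adjacent to
the others because the neighbours of `v` form a clique. Hence `h = ω` for chordal graphs, and
induced subgraphs of chordal graphs are chordal.
-/

namespace SimpleGraph

variable {V : Type*} {G : SimpleGraph V}

/-- Reachability in `G.restrict s` is reachability inside `s`, without passing to the
subtype `↥s`. -/
def restrict (G : SimpleGraph V) (s : Set V) : SimpleGraph V where
  Adj x y := G.Adj x y ∧ x ∈ s ∧ y ∈ s
  symm := ⟨fun _ _ h => ⟨h.1.symm, h.2.2, h.2.1⟩⟩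
  loopless := ⟨fun _ h => G.irrefl h.1⟩

@[simp]
theorem restrict_adj {s : Set V} {x y : V} :
    (G.restrict s).Adj x y ↔ G.Adj x y ∧ x ∈ s ∧ y ∈ s :=
  Iff.rfl

theorem Reachable.mem_of_forall_adj {H : SimpleGraph V} {T : Set V} {x y : V}
    (h : H.Reachable x y) (hT : ∀ u ∈ T, ∀ w, H.Adj u w → w ∈ T) (hx : x ∈ T) : y ∈ T := by
  rw [reachable_iff_reflTransGen] at h
  induction h with
  | refl => exact hx
  | tail _ hadj ih => exact hT _ ih _ hadj

theorem Reachable.mem_of_restrict {s : Set V} {x y : V} (h : (G.restrict s).Reachable x y)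
    (hx : x ∈ s) : y ∈ s :=
  h.mem_of_forall_adj (fun _ _ _ huw => (restrict_adj.1 huw).2.2) hx

theorem connected_induce_iff_restrict {s : Set V} :
    (G.induce s).Connected ↔ s.Nonempty ∧ ∀ x ∈ s, ∀ y ∈ s, (G.restrict s).Reachable x y := by
  constructor
  · intro hc
    obtain ⟨⟨x, hx⟩⟩ := hc.nonempty
    let φ : G.induce s →g G.restrict s := ⟨Subtype.val, fun {a b} h => restrict_adj.2 ⟨h, a.2, b.2⟩⟩
    exact ⟨⟨x, hx⟩, fun x hx y hy => (hc ⟨x, hx⟩ ⟨y, hy⟩).map φ⟩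
  · rintro ⟨⟨x₀, hx₀⟩, hs⟩
    have : Nonempty s := ⟨⟨x₀, hx₀⟩⟩
    refine ⟨fun ⟨x, hx⟩ ⟨y, hy⟩ => ?_⟩
    have h := (reachable_iff_reflTransGen _ _).1 (hs x hx y hy)
    induction h with
    | refl => rfl
    | tail _ hzy ih =>
      obtain ⟨hzy, hz, -⟩ := hzy
      exact (ih hz).trans (Adj.reachable (G := G.induce s) hzy)

theorem induce_singleton_connected (v : V) : (G.induce {v}).Connected :=
  connected_induce_iff_restrict.2 ⟨⟨v, rfl⟩, by rintro x rfl y rfl; rfl⟩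

end SimpleGraph

section CompleteMinor

variable {V W : Type*} {G : SimpleGraph V} {k : ℕ}

structure IsCompleteMinorModel (G : SimpleGraph V) (B : Fin k → Set V) : Prop where
  connected : ∀ i, (G.induce (B i)).Connected
  disjoint : ∀ i j, i ≠ j → Disjoint (B i) (B j)
  exists_adj : ∀ i j, i ≠ j → ∃ u ∈ B i, ∃ v ∈ B j, G.Adj u v

theorem hasCompleteMinor_iff :
    HasCompleteMinor G k ↔ ∃ B : Fin k → Set V, IsCompleteMinorModel G B :=
  ⟨fun ⟨B, h₁, h₂, h₃⟩ => ⟨B, h₁, h₂, h₃⟩, fun ⟨B, h⟩ => ⟨B, h.1, h.2, h.3⟩⟩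

namespace IsCompleteMinorModel

variable {B : Fin k → Set V}

theorem nonempty (hB : IsCompleteMinorModel G B) (i : Fin k) : (B i).Nonempty :=
  (connected_induce_iff_restrict.1 (hB.connected i)).1

theorem injective_of_mem (hB : IsCompleteMinorModel G B) {F : Fin k → V} (hF : ∀ i, F i ∈ B i) :
    Function.Injective F := by
  intro i j hij
  by_contra hne
  exact Set.disjoint_left.1 (hB.disjoint i j hne) (hF i) (hij ▸ hF j)

theorem exists_isNClique_of_mem (hB : IsCompleteMinorModel G B) {F : Fin k → V}
    (hF : ∀ i, F i ∈ B i) (hc : G.IsClique (Set.range F)) : ∃ s : Finset V, G.IsNClique k s := by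
  classical
  refine ⟨Finset.univ.image F, ?_, ?_⟩
  · simpa using hc
  · simp [Finset.card_image_of_injective _ (hB.injective_of_mem hF)]

end IsCompleteMinorModel

theorem hasCompleteMinor_zero (G : SimpleGraph V) : HasCompleteMinor G 0 :=
  ⟨Fin.elim0, fun i => i.elim0, fun i => i.elim0, fun i => i.elim0⟩

theorem HasCompleteMinor.le_card [Finite V] (h : HasCompleteMinor G k) : k ≤ Nat.card V := by
  obtain ⟨B, hB⟩ := hasCompleteMinor_iff.1 h
  choose F hF using hB.nonempty
  simpa using Nat.card_le_card_of_injective F (hB.injective_of_mem hF)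

theorem HasCompleteMinor.map {H : SimpleGraph W} (f : G →g H) (hf : Function.Injective f)
    (h : HasCompleteMinor G k) : HasCompleteMinor H k := by
  obtain ⟨B, hB⟩ := hasCompleteMinor_iff.1 h
  refine hasCompleteMinor_iff.2
    ⟨fun i => f '' B i, fun i => ?_, fun i j hij => ?_, fun i j hij => ?_⟩
  · refine (hB.connected i).map (induceHom f (Set.mapsTo_image f (B i))) ?_
    rintro ⟨_, x, hx, rfl⟩
    exact ⟨⟨x, hx⟩, rfl⟩
  · exact (Set.disjoint_image_iff hf).2 (hB.disjoint i j hij)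
  · obtain ⟨u, hu, v, hv, huv⟩ := hB.exists_adj i j hij
    exact ⟨f u, ⟨u, hu, rfl⟩, f v, ⟨v, hv, rfl⟩, f.map_adj huv⟩

theorem SimpleGraph.IsNClique.hasCompleteMinor {s : Finset V} (h : G.IsNClique k s) :
    HasCompleteMinor G k := by
  let e : Fin k ≃ s := (s.equivFinOfCardEq h.card_eq).symm
  have hne : ∀ {i j}, i ≠ j → (e i : V) ≠ e j := fun hij h => hij (e.injective (Subtype.ext h))
  refine ⟨fun i => {(e i : V)}, fun i => induce_singleton_connected _, fun i j hij => ?_,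
    fun i j hij => ⟨e i, rfl, e j, rfl, h.isClique (e i).2 (e j).2 (hne hij)⟩⟩
  exact Set.disjoint_singleton.2 (hne hij)

theorem le_hadwigerNumber [Finite V] (h : HasCompleteMinor G k) : k ≤ hadwigerNumber G :=
  le_csSup ⟨Nat.card V, fun _ => HasCompleteMinor.le_card⟩ h

theorem hasCompleteMinor_hadwigerNumber [Finite V] (G : SimpleGraph V) :
    HasCompleteMinor G (hadwigerNumber G) :=
  Nat.sSup_mem ⟨0, hasCompleteMinor_zero G⟩ ⟨Nat.card V, fun _ => HasCompleteMinor.le_card⟩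

theorem SimpleGraph.CliqueFree.cliqueNum_lt {n : ℕ} (h : G.CliqueFree n) : G.cliqueNum < n := by
  obtain ⟨s, hs⟩ := G.exists_isNClique_cliqueNum
  by_contra hle
  exact h.mono (not_lt.1 hle) s hs

end CompleteMinor

namespace SimpleGraph

theorem cycleGraph_adj_iff_val {n : ℕ} (hn : 2 ≤ n) {u v : Fin n} :
    (cycleGraph n).Adj u v ↔
      u.val + 1 = v.val ∨ v.val + 1 = u.val ∨ (u.val = 0 ∧ v.val + 1 = n) ∨
        (v.val = 0 ∧ u.val + 1 = n) := by
  rw [cycleGraph_adj']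
  have := u.isLt
  have := v.isLt
  rcases lt_trichotomy u v with h | rfl | h
  · rw [Fin.coe_sub_iff_lt.2 h, Fin.coe_sub_iff_le.2 h.le]
    have := Fin.lt_def.1 h
    omega
  · rw [Fin.coe_sub_iff_le.2 le_rfl]
    omega
  · rw [Fin.coe_sub_iff_le.2 h.le, Fin.coe_sub_iff_lt.2 h]
    have := Fin.lt_def.1 h
    omega

theorem cycleGraph_cliqueFree_three {n : ℕ} (hn : 4 ≤ n) : (cycleGraph n).CliqueFree 3 := by
  classical
  intro s hs
  obtain ⟨a, b, c, hab, hac, hbc, -⟩ := is3Clique_iff.1 hs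
  rw [cycleGraph_adj_iff_val (by omega)] at hab hac hbc
  omega

end SimpleGraph

theorem hasCompleteMinor_cycleGraph_three {n : ℕ} (hn : 3 ≤ n) :
    HasCompleteMinor (cycleGraph n) 3 := by
  have hadj {u v : Fin n} := cycleGraph_adj_iff_val (u := u) (v := v) (by omega)
  -- the branch sets `{0}`, `{1}` and `{2, …, n - 1}`
  let B (i : Fin 3) : Set (Fin n) := {x | min x.val 2 = i.val}
  have hB {i : Fin 3} {x : Fin n} : x ∈ B i ↔ min x.val 2 = i.val := Iff.rfl
  have hiB (i : Fin 3) : (⟨i, by omega⟩ : Fin n) ∈ B i := Nat.min_eq_left (show i.val ≤ 2 by omega)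
  have hreach (i : Fin 3) (m : ℕ) (hm : i.val ≤ m) (h : m < n) (hmi : min m 2 = i.val) :
      ((cycleGraph n).restrict (B i)).Reachable ⟨i, by omega⟩ ⟨m, h⟩ := by
    induction m, hm using Nat.le_induction with
    | base => rfl
    | succ m hm ih =>
      exact (ih (by omega) (by omega)).trans
        (Adj.reachable ⟨hadj.2 (.inl rfl), hB.2 (by dsimp only; omega), hmi⟩)
  refine ⟨B, fun i => ?_, fun i j hij => ?_, fun i j hij => ?_⟩
  · refine connected_induce_iff_restrict.2 ⟨⟨_, hiB i⟩, fun x hx y hy => ?_⟩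
    rw [hB] at hx hy
    exact (hreach i x (by omega) x.isLt hx).symm.trans (hreach i y (by omega) y.isLt hy)
  · exact Set.disjoint_left.2 fun x hi hj => hij (Fin.ext ((hB.1 hi).symm.trans (hB.1 hj)))
  wlog hlt : i < j generalizing i j
  · obtain ⟨u, hu, v, hv, huv⟩ := this j i hij.symm (by omega)
    exact ⟨v, hv, u, hu, huv.symm⟩
  refine ⟨_, hiB i, ⟨if j.val = i.val + 1 then j.val else n - 1, by split_ifs <;> omega⟩,
    hB.2 ?_, hadj.2 ?_⟩
  all_goals
    dsimp only
    split_ifs <;> omega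

theorem hasInducedCopy_iff_isIndContained {V W : Type*} {G : SimpleGraph V} {H : SimpleGraph W} :
    HasInducedCopy G H ↔ H ⊴ G := by
  rw [isIndContained_iff_exists_iso_induce]
  exact exists_congr fun _ => ⟨fun ⟨e⟩ => ⟨e.symm⟩, fun ⟨e⟩ => ⟨e.symm⟩⟩

theorem IsChordal.induce {V : Type*} {G : SimpleGraph V} (hG : IsChordal G) (s : Set V) :
    IsChordal (G.induce s) := fun n hn h =>
  hG n hn <| hasInducedCopy_iff_isIndContained.2 <|
    (hasInducedCopy_iff_isIndContained.1 h).trans (Embedding.induce s).isIndContained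

namespace SimpleGraph

variable {V : Type*} {G : SimpleGraph V}

/-- Paths and walks are encoded as sequences `v : ℕ → V` read on `0, …, m`. -/
def IsInducedPath (G : SimpleGraph V) (v : ℕ → V) (m : ℕ) : Prop :=
  ∀ i j, i < j → j ≤ m → v i ≠ v j ∧ (G.Adj (v i) (v j) ↔ j = i + 1)

theorem cycleGraph_isIndContained_of_seq {n : ℕ} (hn : 2 ≤ n) {c : ℕ → V}
    (hc : ∀ i j, i < j → j < n →
      c i ≠ c j ∧ (G.Adj (c i) (c j) ↔ j = i + 1 ∨ (i = 0 ∧ j + 1 = n))) :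
    cycleGraph n ⊴ G := by
  have key (i j : Fin n) (hij : i < j) :
      c i ≠ c j ∧ (G.Adj (c i) (c j) ↔ (cycleGraph n).Adj i j) := by
    have hij := Fin.lt_def.1 hij
    refine ⟨(hc i j hij j.isLt).1, ?_⟩
    rw [(hc i j hij j.isLt).2, cycleGraph_adj_iff_val hn]
    omega
  refine ⟨⟨⟨fun i => c i, fun i j hij => ?_⟩, fun {i j} => ?_⟩⟩
  · by_contra hne
    rcases lt_or_gt_of_ne hne with h | h
    exacts [(key i j h).1 hij, (key j i h).1 hij.symm]
  · rcases lt_trichotomy i j with h | rfl | h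
    · exact (key i j h).2
    · simp
    · rw [G.adj_comm, (cycleGraph n).adj_comm]
      exact (key j i h).2

theorem cycleGraph_isIndContained_of_isInducedPath {v w : ℕ → V} {p q : ℕ}
    (hv : G.IsInducedPath v p) (hw : G.IsInducedPath w q) (hp : 2 ≤ p) (hq : 2 ≤ q)
    (h₀ : v 0 = w 0) (h₁ : v p = w q)
    (hvw : ∀ i, 0 < i → i < p → ∀ j, 0 < j → j < q → v i ≠ w j ∧ ¬G.Adj (v i) (w j)) :
    cycleGraph (p + q) ⊴ G := by
  set c : ℕ → V := fun k => if k ≤ p then v k else w (p + q - k)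
  have hcv (k : ℕ) (hk : k ≤ p) : c k = v k := if_pos hk
  have hcw (k : ℕ) (hk : p ≤ k) : c k = w (p + q - k) := by
    rcases hk.lt_or_eq with hk | rfl
    · exact if_neg (by omega)
    · rw [hcv p le_rfl, h₁, Nat.add_sub_cancel_left]
  refine cycleGraph_isIndContained_of_seq (c := c) (by omega) fun i j hij hj => ?_
  rcases le_or_gt j p with hjp | hjp
  · rw [hcv i (by omega), hcv j hjp]
    refine (hv i j hij hjp).imp_right fun h => h.trans ?_
    omega
  rcases le_or_gt p i with hip | hip
  · rw [hcw i hip, hcw j hjp.le, G.adj_comm]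
    refine (hw _ _ (by omega) (by omega)).imp (Ne.symm) fun h => h.trans ?_
    omega
  rw [hcv i hip.le, hcw j hjp.le]
  rcases Nat.eq_zero_or_pos i with rfl | hi
  · rw [h₀]
    refine (hw 0 _ (by omega) (by omega)).imp_right fun h => h.trans ?_
    omega
  · obtain ⟨hne, hnadj⟩ := hvw i hi hip (p + q - j) (by omega) (by omega)
    exact ⟨hne, iff_of_false hnadj (by omega)⟩

end SimpleGraph

namespace SimpleGraph

variable {V : Type*} {G : SimpleGraph V} {A : Set V}

def IsWalkThrough (G : SimpleGraph V) (A : Set V) (v : ℕ → V) (m : ℕ) : Prop :=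
  (∀ i < m, G.Adj (v i) (v (i + 1))) ∧ ∀ i, 0 < i → i < m → v i ∈ A

namespace IsWalkThrough

variable {v : ℕ → V} {m : ℕ}

theorem mono {k : ℕ} (h : G.IsWalkThrough A v m) (hk : k ≤ m) : G.IsWalkThrough A v k :=
  ⟨fun i hi => h.1 i (by omega), fun i hi₀ hi => h.2 i hi₀ (by omega)⟩

theorem snoc {y : V} (h : G.IsWalkThrough A v m) (hm : 0 < m → v m ∈ A) (hy : G.Adj (v m) y) :
    G.IsWalkThrough A (Function.update v (m + 1) y) (m + 1) := by
  have hv (i : ℕ) (hi : i ≤ m) : Function.update v (m + 1) y i = v i :=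
    Function.update_of_ne (by omega) _ _
  refine ⟨fun i hi => ?_, fun i hi₀ hi => ?_⟩
  · rcases Nat.lt_succ_iff_lt_or_eq.1 hi with hi | rfl
    · rw [hv i hi.le, hv (i + 1) hi]
      exact h.1 i hi
    · rwa [hv i le_rfl, Function.update_self]
  · rw [hv i (by omega)]
    rcases Nat.lt_succ_iff_lt_or_eq.1 hi with hi | rfl
    exacts [h.2 i hi₀ hi, hm hi₀]

theorem splice (h : G.IsWalkThrough A v m) {i d : ℕ} (hid : i + d < m)
    (hadj : G.Adj (v i) (v (i + d + 1))) :
    ∃ w, G.IsWalkThrough A w (m - d) ∧ w 0 = v 0 ∧ w (m - d) = v m := by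
  refine ⟨fun k => if k ≤ i then v k else v (k + d), ⟨fun k hk => ?_, fun k hk₀ hk => ?_⟩,
    if_pos (Nat.zero_le i), ?_⟩
  · dsimp only
    rcases lt_trichotomy k i with hki | rfl | hki
    · rw [if_pos hki.le, if_pos (show k + 1 ≤ i by omega)]
      exact h.1 k (by omega)
    · rwa [if_pos le_rfl, if_neg (by omega), Nat.add_right_comm]
    · rw [if_neg (by omega), if_neg (by omega), Nat.add_right_comm]
      exact h.1 _ (by omega)
  · dsimp only
    split_ifs
    exacts [h.2 k hk₀ (by omega), h.2 _ (by omega) (by omega)]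
  · dsimp only
    rw [if_neg (by omega), Nat.sub_add_cancel (by omega)]

theorem exists_isInducedPath (h : G.IsWalkThrough A v m) :
    ∃ m' w, G.IsWalkThrough A w m' ∧ w 0 = v 0 ∧ w m' = v m ∧ G.IsInducedPath w m' := by
  classical
  have hex : ∃ m', ∃ w, G.IsWalkThrough A w m' ∧ w 0 = v 0 ∧ w m' = v m := ⟨m, v, h, rfl, rfl⟩
  obtain ⟨w, hw, hw₀, hw₁⟩ := Nat.find_spec hex
  have hmin {m'} (hm' : m' < Nat.find hex) {u} (hu : G.IsWalkThrough A u m') (hu₀ : u 0 = v 0)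
      (hu₁ : u m' = v m) : False :=
    Nat.find_min hex hm' ⟨u, hu, hu₀, hu₁⟩
  refine ⟨_, w, hw, hw₀, hw₁, fun i j hij hj => ⟨fun heq => ?_, ⟨fun hadj => ?_, ?_⟩⟩⟩
  · rcases hj.lt_or_eq with hj | rfl
    · obtain ⟨u, hu, hu₀, hu₁⟩ := hw.splice (i := i) (d := j - i) (by omega)
        (by rw [show i + (j - i) + 1 = j + 1 by omega, heq]; exact hw.1 j hj)
      exact hmin (by omega) hu (hu₀.trans hw₀) (hu₁.trans hw₁)
    · exact hmin hij (hw.mono hij.le) hw₀ (heq.trans hw₁)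
  · by_contra hne
    obtain ⟨u, hu, hu₀, hu₁⟩ := hw.splice (i := i) (d := j - i - 1) (by omega)
      (by rwa [show i + (j - i - 1) + 1 = j by omega])
    exact hmin (by omega) hu (hu₀.trans hw₀) (hu₁.trans hw₁)
  · rintro rfl
    exact hw.1 i (by omega)

end IsWalkThrough

theorem exists_isWalkThrough_of_reachable {x y u w : V} (hxu : G.Adj x u) (hwy : G.Adj w y)
    (hu : u ∈ A) (h : (G.restrict A).Reachable u w) :
    ∃ m v, G.IsWalkThrough A v m ∧ v 0 = x ∧ v m = y := by
  have hpath (z : V) (hz : Relation.ReflTransGen (G.restrict A).Adj u z) :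
      ∃ m v, G.IsWalkThrough A v m ∧ v 0 = x ∧ v m = z := by
    induction hz with
    | refl =>
      have h₀ : G.IsWalkThrough A (fun _ => x) 0 := ⟨by simp, by simp⟩
      exact ⟨1, _, h₀.snoc (by simp) hxu, Function.update_of_ne (by simp) _ _,
        Function.update_self ..⟩
    | tail _ hzz' ih =>
      obtain ⟨hzz', hz, -⟩ := hzz'
      obtain ⟨m, v, hv, hv₀, hv₁⟩ := ih
      refine ⟨m + 1, _, hv.snoc (fun _ => hv₁ ▸ hz) (hv₁ ▸ hzz'),
        (Function.update_of_ne (by simp) _ _).trans hv₀, Function.update_self ..⟩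
  obtain ⟨m, v, hv, hv₀, hv₁⟩ := hpath w ((reachable_iff_reflTransGen _ _).1 h)
  exact ⟨m + 1, _, hv.snoc (fun _ => hv₁ ▸ h.mem_of_restrict hu) (hv₁ ▸ hwy),
    (Function.update_of_ne (by simp) _ _).trans hv₀, Function.update_self ..⟩

end SimpleGraph

theorem IsChordal.adj_of_isWalkThrough {V : Type*} {G : SimpleGraph V} (hG : IsChordal G)
    {A B : Set V} {x y : V} {v w : ℕ → V} {p q : ℕ}
    (hv : G.IsWalkThrough A v p) (hv₀ : v 0 = x) (hv₁ : v p = y)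
    (hw : G.IsWalkThrough B w q) (hw₀ : w 0 = x) (hw₁ : w q = y)
    (hxy : x ≠ y) (hAB : ∀ a ∈ A, ∀ b ∈ B, a ≠ b ∧ ¬G.Adj a b) : G.Adj x y := by
  by_contra hnadj
  have two_le {m u} (hu : G.IsInducedPath u m) (h₀ : u 0 = x) (h₁ : u m = y) : 2 ≤ m := by
    by_contra hm
    interval_cases m
    · exact hxy (h₀.symm.trans h₁)
    · exact hnadj (h₀ ▸ h₁ ▸ (hu 0 1 one_pos le_rfl).2.2 rfl)
  obtain ⟨p, v, hv, hv₀', hv₁', hvi⟩ := hv.exists_isInducedPath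
  obtain ⟨q, w, hw, hw₀', hw₁', hwi⟩ := hw.exists_isInducedPath
  have hp := two_le hvi (hv₀'.trans hv₀) (hv₁'.trans hv₁)
  have hq := two_le hwi (hw₀'.trans hw₀) (hw₁'.trans hw₁)
  refine hG (p + q) (by omega) (hasInducedCopy_iff_isIndContained.2 ?_)
  refine cycleGraph_isIndContained_of_isInducedPath hvi hwi hp hq (by rw [hv₀', hw₀', hv₀, hw₀])
    (by rw [hv₁', hw₁', hv₁, hw₁]) fun i hi hip j hj hjq => ?_
  exact hAB _ (hv.2 i hi hip) _ (hw.2 j hj hjq)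

namespace SimpleGraph

variable {V : Type*} {G : SimpleGraph V}

def IsSimplicialIn (G : SimpleGraph V) (U : Set V) (v : V) : Prop :=
  v ∈ U ∧ G.IsClique (G.neighborSet v ∩ U)

def IsSeparator (G : SimpleGraph V) (U S : Set V) (a b : V) : Prop :=
  S ⊆ U ∧ a ∈ U \ S ∧ b ∈ U \ S ∧ ¬(G.restrict (U \ S)).Reachable a b

theorem Reachable.restrict_setOf_reachable {s : Set V} {a x : V}
    (h : (G.restrict s).Reachable a x) :
    (G.restrict {y | (G.restrict s).Reachable a y}).Reachable a x := by
  rw [reachable_iff_reflTransGen] at h ⊢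
  induction h with
  | refl => rfl
  | tail haz hzx ih =>
    have haz := (reachable_iff_reflTransGen _ _).2 haz
    exact ih.tail ⟨hzx.1, haz, haz.trans hzx.reachable⟩

variable {U S : Set V} {a b : V}

theorem isSeparator_comm : G.IsSeparator U S a b ↔ G.IsSeparator U S b a :=
  ⟨fun ⟨hSU, ha, hb, h⟩ => ⟨hSU, hb, ha, fun h' => h h'.symm⟩,
    fun ⟨hSU, hb, ha, h⟩ => ⟨hSU, ha, hb, fun h' => h h'.symm⟩⟩

theorem isSeparator_sdiff_pair (ha : a ∈ U) (hb : b ∈ U) (hab : a ≠ b) (hnadj : ¬G.Adj a b) :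
    G.IsSeparator U (U \ {a, b}) a b := by
  refine ⟨Set.sdiff_subset, ⟨ha, fun h => h.2 (.inl rfl)⟩, ⟨hb, fun h => h.2 (.inr rfl)⟩,
    fun h => hab (h.mem_of_forall_adj (T := {a}) ?_ rfl).symm⟩
  rintro u rfl w ⟨huw, -, hwU, hw⟩
  simp only [Set.mem_sdiff, hwU, true_and, not_not, Set.mem_insert_iff,
    Set.mem_singleton_iff] at hw
  rcases hw with rfl | rfl
  exacts [absurd huw (G.irrefl), absurd huw hnadj]

namespace IsSeparator

theorem setOf_reachable_union_ssubset (hS : G.IsSeparator U S a b) :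
    {u | (G.restrict (U \ S)).Reachable a u} ∪ S ⊂ U := by
  obtain ⟨hSU, ha, hb, hab⟩ := hS
  refine (Set.ssubset_iff_of_subset ?_).2 ⟨b, hb.1, ?_⟩
  · rintro u (hu | hu)
    exacts [(hu.mem_of_restrict ha).1, hSU hu]
  · rintro (hb' | hb')
    exacts [hab hb', hb.2 hb']

theorem ne_and_not_adj (hS : G.IsSeparator U S a b) {u w : V}
    (hu : (G.restrict (U \ S)).Reachable a u) (hw : (G.restrict (U \ S)).Reachable b w) :
    u ≠ w ∧ ¬G.Adj u w := by
  obtain ⟨-, ha, hb, hab⟩ := hS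
  refine ⟨fun huw => hab (hu.trans (huw ▸ hw.symm)), fun huw => hab ?_⟩
  exact (hu.trans (Adj.reachable ⟨huw, hu.mem_of_restrict ha, hw.mem_of_restrict hb⟩)).trans hw.symm

theorem exists_adj_of_minimal (hS : Minimal (G.IsSeparator U · a b) S) {s : V} (hs : s ∈ S) :
    ∃ u, (G.restrict (U \ S)).Reachable a u ∧ G.Adj s u := by
  by_contra! hno
  obtain ⟨hSU, ha, hb, hab⟩ := hS.prop
  have hsub : U \ S ⊆ U \ (S \ {s}) := Set.sdiff_subset_sdiff_right Set.sdiff_subset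
  refine hS.not_prop_of_ssubset (Set.sdiff_singleton_ssubset.2 hs)
    ⟨Set.sdiff_subset.trans hSU, hsub ha, hsub hb, fun h => hab <|
      h.mem_of_forall_adj (T := {u | (G.restrict (U \ S)).Reachable a u}) ?_ (Reachable.refl a)⟩
  rintro u hu w ⟨huw, -, hwU, hwS⟩
  by_cases hws : w = s
  · exact absurd huw.symm (hws ▸ hno u hu)
  · exact hu.trans (Adj.reachable ⟨huw, hu.mem_of_restrict ha, hwU, fun h => hwS ⟨h, hws⟩⟩)

end IsSeparator

end SimpleGraph

section Dirac

open SimpleGraph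

variable {V : Type*} {G : SimpleGraph V} {U S : Set V} {a b : V}

theorem IsChordal.isClique_of_minimal_separator (hG : IsChordal G)
    (hS : Minimal (G.IsSeparator U · a b) S) : G.IsClique S := by
  intro x hx y hy hxy
  have walk {c d : V} (hS : Minimal (G.IsSeparator U · c d) S) :
      ∃ m v, G.IsWalkThrough {u | (G.restrict (U \ S)).Reachable c u} v m ∧ v 0 = x ∧ v m = y := by
    obtain ⟨ux, hux, hxux⟩ := IsSeparator.exists_adj_of_minimal hS hx
    obtain ⟨uy, huy, hyuy⟩ := IsSeparator.exists_adj_of_minimal hS hy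
    exact exists_isWalkThrough_of_reachable hxux hyuy.symm hux
      (hux.restrict_setOf_reachable.symm.trans huy.restrict_setOf_reachable)
  have hS' : Minimal (G.IsSeparator U · b a) S := by
    simpa only [isSeparator_comm (a := b)] using hS
  obtain ⟨p, v, hv, hv₀, hv₁⟩ := walk hS
  obtain ⟨q, w, hw, hw₀, hw₁⟩ := walk hS'
  exact hG.adj_of_isWalkThrough hv hv₀ hv₁ hw hw₀ hw₁ hxy
    fun _ hu _ hw => hS.prop.ne_and_not_adj hu hw

theorem exists_isSimplicialIn_of_component_union_clique (ha : a ∈ U \ S) (hSc : G.IsClique S)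
    (hC : let C := {u | (G.restrict (U \ S)).Reachable a u} ∪ S
      G.IsClique C ∨ ∃ u w, u ≠ w ∧ ¬G.Adj u w ∧ G.IsSimplicialIn C u ∧ G.IsSimplicialIn C w) :
    ∃ u, (G.restrict (U \ S)).Reachable a u ∧ G.IsSimplicialIn U u := by
  set A := {u | (G.restrict (U \ S)).Reachable a u}
  have hlift {u} (hu : u ∈ A) (hsu : G.IsSimplicialIn (A ∪ S) u) : G.IsSimplicialIn U u := by
    refine ⟨(hu.mem_of_restrict ha).1, hsu.2.subset ?_⟩
    rintro z ⟨huz, hzU⟩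
    refine ⟨huz, ?_⟩
    by_cases hzS : z ∈ S
    · exact Or.inr hzS
    · exact Or.inl (hu.trans (Adj.reachable ⟨huz, hu.mem_of_restrict ha, hzU, hzS⟩))
  rcases hC with hC | ⟨u, w, hne, hnadj, hu, hw⟩
  · exact ⟨a, .rfl, hlift .rfl ⟨Or.inl .rfl, hC.subset Set.inter_subset_right⟩⟩
  rcases hu.1 with huA | huS
  · exact ⟨u, huA, hlift huA hu⟩
  rcases hw.1 with hwA | hwS
  · exact ⟨w, hwA, hlift hwA hw⟩
  · exact absurd (hSc huS hwS hne) hnadj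

theorem IsChordal.isClique_or_exists_isSimplicialIn_pair [Finite V] (hG : IsChordal G)
    (U : Set V) :
    G.IsClique U ∨ ∃ u w, u ≠ w ∧ ¬G.Adj u w ∧ G.IsSimplicialIn U u ∧ G.IsSimplicialIn U w := by
  induction hn : U.ncard using Nat.strong_induction_on generalizing U with
  | _ n ih =>
  subst hn
  by_cases hcl : G.IsClique U
  · exact Or.inl hcl
  obtain ⟨a, ha, b, hb, hab, hnadj⟩ : ∃ a ∈ U, ∃ b ∈ U, a ≠ b ∧ ¬G.Adj a b := by
    simpa [IsClique, Set.Pairwise] using hcl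
  obtain ⟨S, -, hS⟩ := exists_minimal_le_of_wellFoundedLT (G.IsSeparator U · a b) _
    (isSeparator_sdiff_pair ha hb hab hnadj)
  have hSc := hG.isClique_of_minimal_separator hS
  have side {c d : V} (h : G.IsSeparator U S c d) :
      ∃ u, (G.restrict (U \ S)).Reachable c u ∧ G.IsSimplicialIn U u := by
    exact exists_isSimplicialIn_of_component_union_clique h.2.1 hSc
      (ih _ (Set.ncard_lt_ncard h.setOf_reachable_union_ssubset) _ rfl)
  obtain ⟨u, hu, hsu⟩ := side hS.prop
  obtain ⟨w, hw, hsw⟩ := side (isSeparator_comm.1 hS.prop)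
  obtain ⟨hne, hnadj⟩ := hS.prop.ne_and_not_adj hu hw
  exact Or.inr ⟨u, w, hne, hnadj, hsu, hsw⟩

theorem IsChordal.exists_isSimplicialIn [Finite V] (hG : IsChordal G) (hU : U.Nonempty) :
    ∃ v, G.IsSimplicialIn U v := by
  rcases hG.isClique_or_exists_isSimplicialIn_pair U with hU' | ⟨u, -, -, -, hu, -⟩
  · obtain ⟨v, hv⟩ := hU
    exact ⟨v, hv, hU'.subset Set.inter_subset_right⟩
  · exact ⟨u, hu⟩

end Dirac

namespace SimpleGraph

variable {V : Type*} {G : SimpleGraph V} {s : Set V} {v : V}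

theorem exists_adj_of_connected_induce (h : (G.induce s).Connected) (hv : v ∈ s) {w : V}
    (hw : w ∈ s) (hvw : v ≠ w) : ∃ u ∈ s, G.Adj v u := by
  obtain ⟨-, hs⟩ := connected_induce_iff_restrict.1 h
  rcases ((reachable_iff_reflTransGen _ _).1 (hs v hv w hw)).cases_head with
    h | ⟨u, ⟨hvu, -, hu⟩, -⟩
  exacts [absurd h hvw, ⟨u, hu, hvu⟩]

theorem connected_induce_diff_singleton (h : (G.induce s).Connected)
    (hv : G.IsClique (G.neighborSet v ∩ s)) (hne : (s \ {v}).Nonempty) :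
    (G.induce (s \ {v})).Connected := by
  obtain ⟨-, hs⟩ := connected_induce_iff_restrict.1 h
  refine connected_induce_iff_restrict.2 ⟨hne, fun x hx y hy => ?_⟩
  -- A walk inside `s` that passes through `v` is short-cut by the edge between the two
  -- neighbours of `v` it uses.
  have key (z : V) (hz : Relation.ReflTransGen (G.restrict s).Adj x z) :
      (z ≠ v → (G.restrict (s \ {v})).Reachable x z) ∧
        (z = v → ∀ u ∈ s, G.Adj v u → (G.restrict (s \ {v})).Reachable x u) := by
    induction hz with
    | refl => exact ⟨fun _ => .rfl, fun h => absurd h hx.2⟩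
    | @tail b c _ hbc ih =>
      obtain ⟨hbc, hb, hc⟩ := hbc
      by_cases hbv : b = v
      · subst hbv
        exact ⟨fun _ => ih.2 rfl c hc hbc, fun h => absurd (h ▸ hbc) (G.irrefl)⟩
      have hxb := ih.1 hbv
      refine ⟨fun hcv => hxb.trans (Adj.reachable ⟨hbc, ⟨hb, hbv⟩, hc, hcv⟩), ?_⟩
      rintro rfl u hu hcu
      by_cases hub : u = b
      · exact hub ▸ hxb
      exact hxb.trans (Adj.reachable
        ⟨hv ⟨hbc.symm, hb⟩ ⟨hcu, hu⟩ (Ne.symm hub), ⟨hb, hbv⟩, hu, hcu.ne'⟩)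
  exact (key y ((reachable_iff_reflTransGen _ _).1 (hs x hx.1 y hy.1))).1 hy.2

end SimpleGraph

namespace IsCompleteMinorModel

variable {V : Type*} {G : SimpleGraph V} {k : ℕ} {B : Fin k → Set V} {U : Set V} {v : V}

theorem exists_isNClique_of_eq_singleton (hB : IsCompleteMinorModel G B) (hBU : ∀ i, B i ⊆ U)
    (hv : G.IsClique (G.neighborSet v ∩ U)) {i : Fin k} (hi : B i = {v}) :
    ∃ s : Finset V, G.IsNClique k s := by
  have hrep (j : Fin k) : ∃ u ∈ B j, u = v ∨ G.Adj v u := by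
    by_cases hj : j = i
    · exact ⟨v, hj ▸ hi ▸ rfl, .inl rfl⟩
    · obtain ⟨u, hu, z, hz, huz⟩ := hB.exists_adj i j (Ne.symm hj)
      rw [hi, Set.mem_singleton_iff] at hu
      exact ⟨z, hz, .inr (hu ▸ huz)⟩
  choose F hF hFv using hrep
  refine hB.exists_isNClique_of_mem hF ((hv.insert fun u hu _ => hu.1).subset ?_)
  rintro _ ⟨j, rfl⟩
  rcases hFv j with h | h
  exacts [.inl h, .inr ⟨h, hBU j (hF j)⟩]

theorem diff_singleton (hB : IsCompleteMinorModel G B) (hBU : ∀ i, B i ⊆ U)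
    (hv : G.IsClique (G.neighborSet v ∩ U)) (hne : ∀ i, B i ≠ {v}) :
    IsCompleteMinorModel G fun i => B i \ {v} := by
  have hne' (i : Fin k) : (B i \ {v}).Nonempty :=
    Set.sdiff_nonempty.2 fun h => hne i ((hB.nonempty i).subset_singleton_iff.1 h)
  have hvB {i j : Fin k} (hij : i ≠ j) (hv : v ∈ B i) {z : V} (hz : z ∈ B j) : z ≠ v :=
    fun h => Set.disjoint_left.1 (hB.disjoint i j hij) hv (h ▸ hz)
  have hshift {i j : Fin k} (hij : i ≠ j) (hvi : v ∈ B i) {z : V} (hz : z ∈ B j) (hvz : G.Adj v z) :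
      ∃ u ∈ B i \ {v}, G.Adj u z := by
    obtain ⟨w, hw, hwv⟩ := hne' i
    obtain ⟨u, hu, hvu⟩ := exists_adj_of_connected_induce (hB.connected i) hvi hw (Ne.symm hwv)
    refine ⟨u, ⟨hu, hvu.ne'⟩, hv ⟨hvu, hBU i hu⟩ ⟨hvz, hBU j hz⟩ fun h => ?_⟩
    exact Set.disjoint_left.1 (hB.disjoint i j hij) hu (h ▸ hz)
  refine ⟨fun i => connected_induce_diff_singleton (hB.connected i)
      (hv.subset (Set.inter_subset_inter_right _ (hBU i))) (hne' i),
    fun i j hij => (hB.disjoint i j hij).mono Set.sdiff_subset Set.sdiff_subset,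
    fun i j hij => ?_⟩
  obtain ⟨u, hu, z, hz, huz⟩ := hB.exists_adj i j hij
  by_cases huv : u = v
  · subst huv
    obtain ⟨u', hu', hu'z⟩ := hshift hij hu hz huz
    exact ⟨u', hu', z, ⟨hz, hvB hij hu hz⟩, hu'z⟩
  by_cases hzv : z = v
  · subst hzv
    obtain ⟨z', hz', hz'u⟩ := hshift (Ne.symm hij) hz hu huz.symm
    exact ⟨u, ⟨hu, huv⟩, z', hz', hz'u.symm⟩
  · exact ⟨u, ⟨hu, huv⟩, z, ⟨hz, hzv⟩, huz⟩

end IsCompleteMinorModel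

section

variable {V : Type*} [Finite V] {G : SimpleGraph V} {k : ℕ}

theorem IsChordal.exists_isNClique_of_hasCompleteMinor (hG : IsChordal G)
    (h : HasCompleteMinor G k) : ∃ s : Finset V, G.IsNClique k s := by
  obtain ⟨B, hB⟩ := hasCompleteMinor_iff.1 h
  -- Induct on a set `U` containing all branch sets; deleting a simplicial vertex of `U` shrinks it.
  suffices ∀ U : Set V, ∀ B : Fin k → Set V, IsCompleteMinorModel G B → (∀ i, B i ⊆ U) →
      ∃ s : Finset V, G.IsNClique k s from this _ B hB fun _ => Set.subset_univ _
  intro U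
  induction hn : U.ncard using Nat.strong_induction_on generalizing U with
  | _ n ih =>
  subst hn
  intro B hB hBU
  rcases U.eq_empty_or_nonempty with rfl | hU
  · obtain rfl : k = 0 := by
      by_contra hk
      obtain ⟨x, hx⟩ := hB.nonempty ⟨0, by omega⟩
      exact hBU _ hx
    exact ⟨∅, isNClique_empty.2 rfl⟩
  obtain ⟨v, hvU, hv⟩ := hG.exists_isSimplicialIn hU
  by_cases hi : ∃ i, B i = {v}
  · obtain ⟨i, hi⟩ := hi
    exact hB.exists_isNClique_of_eq_singleton hBU hv hi
  push Not at hi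
  exact ih _ (Set.ncard_sdiff_singleton_lt_of_mem hvU) _ rfl _ (hB.diff_singleton hBU hv hi)
    fun i => Set.sdiff_subset_sdiff_left (hBU i)

theorem IsChordal.hadwigerNumber_eq_cliqueNum (hG : IsChordal G) :
    hadwigerNumber G = G.cliqueNum := by
  apply le_antisymm
  · obtain ⟨s, hs⟩ := hG.exists_isNClique_of_hasCompleteMinor (hasCompleteMinor_hadwigerNumber G)
    exact hs.card_eq ▸ hs.isClique.card_le_cliqueNum
  · obtain ⟨s, hs⟩ := G.exists_isNClique_cliqueNum
    exact le_hadwigerNumber hs.hasCompleteMinor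

end

/-- A finite simple graph `G` is ωh-perfect (every induced subgraph has
Hadwiger number equal to its clique number) iff `G` is chordal. -/
theorem omega_hadwiger_perfect_iff_chordal {V : Type*} [Fintype V] (G : SimpleGraph V) :
    (∀ s : Set V, hadwigerNumber (G.induce s) = (G.induce s).cliqueNum) ↔ IsChordal G := by
  refine ⟨fun h n hn ⟨s, ⟨e⟩⟩ => ?_, fun hG s => (hG.induce s).hadwigerNumber_eq_cliqueNum⟩
  have hminor : 3 ≤ hadwigerNumber (G.induce s) :=
    le_hadwigerNumber <|
      (hasCompleteMinor_cycleGraph_three (by omega)).map e.symm.toHom e.symm.injective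
  have hclique : (G.induce s).cliqueNum < 3 :=
    ((cycleGraph_cliqueFree_three hn).comap e.isContained).cliqueNum_lt
  exact absurd (h s) (by omega)
end

section
/- A finite simple graph G is ωψ-perfect (for every induced subgraph H, the clique number of H equals the pseudoachromatic number of H) if and only if G is bψ-perfect (for every induced subgraph H, the b-chromatic number of H equals the pseudoachromatic number of H). -/
open SimpleGraph

/-!
ω ≤ b ≤ ψ holds in every graph, because a proper colouring with the fewest colours is
dominating. Conversely P₄, C₄, P₃ + K₂ and 3K₂ all have b = 2 < 3 = ψ, so a bψ-perfect graph
contains none of them as an induced subgraph, and for such graphs ψ ≤ ω by induction on the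
order. By Wolk's argument, no edge leaves the closed neighbourhood N[v] of a vertex v of maximum
degree. If every edge lies in N[v], then ψ(G) ≤ ψ(G[N(v)]) + 1 ≤ ω(G[N(v)]) + 1 ≤ ω(G).
Otherwise some edge de lies outside N[v]; the exclusion of P₃ + K₂ and 3K₂ makes N[v] and N[d]
two cliques covering all edges, and every colour of a complete colouring must appear in one and
the same of them.
-/

section Colorings

variable {V : Type*} {G : SimpleGraph V}

lemma SimpleGraph.Coloring.nonempty_coloring_subtype_ne {α : Type*} (C : G.Coloring α) {i : α}
    (hi : ∀ v, C v = i → ∃ j, j ≠ i ∧ ∀ u, G.Adj v u → C u ≠ j) :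
    Nonempty (G.Coloring {j // j ≠ i}) := by
  classical
  choose j hji hj using hi
  let f : V → {j // j ≠ i} := fun v =>
    if h : C v = i then ⟨j v h, hji v h⟩ else ⟨C v, h⟩
  refine ⟨Coloring.mk f fun {u v} huv hf => ?_⟩
  simp only [f] at hf
  split_ifs at hf with hu hv hv
  · exact C.valid huv (hu.trans hv.symm)
  · exact hj u hu v huv (congrArg Subtype.val hf).symm
  · exact hj v hv u huv.symm (congrArg Subtype.val hf)
  · exact C.valid huv (congrArg Subtype.val hf)

variable [Finite V]

lemma bddAbove_setOf_isCompleteColoring (G : SimpleGraph V) :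
    BddAbove {k | ∃ c : V → Fin k, IsCompleteColoring G c} :=
  ⟨Nat.card V, fun _ ⟨c, hc⟩ => by simpa using Nat.card_le_card_of_surjective c hc.1⟩

lemma IsCompleteColoring.le_pseudoachromaticNumber {k : ℕ} {c : V → Fin k}
    (hc : IsCompleteColoring G c) : k ≤ pseudoachromaticNumber G :=
  le_csSup (bddAbove_setOf_isCompleteColoring G) ⟨c, hc⟩

lemma card_le_pseudoachromaticNumber {α : Type*} [Fintype α] (c : V → α)
    (hs : Function.Surjective c)
    (hc : ∀ i j, i ≠ j → ∃ u v, G.Adj u v ∧ c u = i ∧ c v = j) :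
    Fintype.card α ≤ pseudoachromaticNumber G := by
  set e := Fintype.equivFin α
  refine IsCompleteColoring.le_pseudoachromaticNumber (c := e ∘ c)
    ⟨e.surjective.comp hs, fun i j hij => ?_⟩
  obtain ⟨u, v, huv, hu, hv⟩ := hc (e.symm i) (e.symm j) (by simpa using hij)
  exact ⟨u, v, huv, by simp [hu], by simp [hv]⟩

lemma exists_isCompleteColoring_pseudoachromaticNumber (G : SimpleGraph V) :
    ∃ c : V → Fin (pseudoachromaticNumber G), IsCompleteColoring G c := by
  refine Nat.sSup_mem ?_ (bddAbove_setOf_isCompleteColoring G)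
  cases isEmpty_or_nonempty V with
  | inl _ => exact ⟨0, isEmptyElim, fun i => i.elim0, fun i => i.elim0⟩
  | inr hV => exact ⟨1, fun _ => 0, fun _ => ⟨hV.some, Subsingleton.elim _ _⟩,
      fun i j hij => absurd (Subsingleton.elim i j) hij⟩

lemma pseudoachromaticNumber_le_cliqueNum_of_lt_two (h : pseudoachromaticNumber G < 2) :
    pseudoachromaticNumber G ≤ G.cliqueNum := by
  classical
  obtain ⟨c, hc⟩ := exists_isCompleteColoring_pseudoachromaticNumber G
  rcases Nat.eq_zero_or_pos (pseudoachromaticNumber G) with h0 | hpos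
  · exact h0 ▸ Nat.zero_le _
  obtain ⟨x, -⟩ := hc.1 ⟨0, hpos⟩
  have := IsClique.card_le_cliqueNum (G := G) (t := {x}) (tc := by simp)
  simp only [Finset.card_singleton] at this
  omega

lemma bChromaticNumber_le_pseudoachromaticNumber (G : SimpleGraph V) :
    bChromaticNumber G ≤ pseudoachromaticNumber G := by
  refine csSup_le' ?_
  rintro k ⟨c, -, hs, hdom⟩
  refine IsCompleteColoring.le_pseudoachromaticNumber ⟨hs, fun i j hij => ?_⟩
  obtain ⟨v, hv, hvdom⟩ := hdom i
  obtain ⟨u, hvu, hu⟩ := hvdom j hij.symm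
  exact ⟨v, u, hvu, hv, hu⟩

lemma cliqueNum_le_bChromaticNumber (G : SimpleGraph V) :
    G.cliqueNum ≤ bChromaticNumber G := by
  classical
  have := Fintype.ofFinite V
  have hex : ∃ n, G.Colorable n := ⟨_, G.colorable_of_fintype⟩
  obtain ⟨C⟩ := Nat.find_spec hex
  -- an undominated colour class could be recoloured away, against the minimality of `C`
  have hdom : ∀ i, ∃ v, C v = i ∧ ∀ j, j ≠ i → ∃ u, G.Adj v u ∧ C u = j := by
    intro i
    by_contra h
    push Not at h
    obtain ⟨C'⟩ := C.nonempty_coloring_subtype_ne h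
    have := Nat.find_min' hex (by simpa using C'.colorable)
    have := i.pos
    omega
  have hb : Nat.find hex ≤ bChromaticNumber G := by
    refine le_csSup ⟨Nat.card V, ?_⟩
      ⟨C, fun _ _ h => C.valid h, fun i => (hdom i).imp fun _ h => h.1, hdom⟩
    rintro _ ⟨c, -, hc, -⟩
    simpa using Nat.card_le_card_of_surjective c hc
  obtain ⟨t, ht⟩ := G.exists_isNClique_cliqueNum
  exact ht.card_eq ▸ (ht.isClique.card_le_of_colorable (Nat.find_spec hex)).trans hb

lemma cliqueNum_le_pseudoachromaticNumber (G : SimpleGraph V) :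
    G.cliqueNum ≤ pseudoachromaticNumber G :=
  (cliqueNum_le_bChromaticNumber G).trans (bChromaticNumber_le_pseudoachromaticNumber G)

end Colorings

namespace SimpleGraph

variable {V : Type*} {G : SimpleGraph V}

def Anticomplete (G : SimpleGraph V) (s t : Set V) : Prop :=
  ∀ ⦃x⦄, x ∈ s → ∀ ⦃y⦄, y ∈ t → ¬G.Adj x y

/- In the following four definitions the listed (non-)adjacencies force the vertices to be
distinct, except for the pairs required to be distinct explicitly. -/

def P4Free (G : SimpleGraph V) : Prop :=
  ∀ ⦃a b c d⦄, G.Adj a b → G.Adj b c → G.Adj c d →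
    ¬G.Adj a c → ¬G.Adj b d → ¬G.Adj a d → False

def C4Free (G : SimpleGraph V) : Prop :=
  ∀ ⦃a b c d⦄, G.Adj a b → G.Adj b c → G.Adj c d → G.Adj d a →
    a ≠ c → b ≠ d → ¬G.Adj a c → ¬G.Adj b d → False

def P3K2Free (G : SimpleGraph V) : Prop :=
  ∀ ⦃a b c d e⦄, G.Adj a b → G.Adj b c → a ≠ c → ¬G.Adj a c → G.Adj d e →
    G.Anticomplete {a, b, c} {d, e} → False

def ThreeK2Free (G : SimpleGraph V) : Prop :=
  ∀ ⦃a b c d e f⦄, G.Adj a b → G.Adj c d → G.Adj e f →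
    G.Anticomplete {a, b} {c, d} → G.Anticomplete {a, b} {e, f} →
    G.Anticomplete {c, d} {e, f} → False

lemma Anticomplete.mono {s t s' t' : Set V} (h : G.Anticomplete s t) (hs : s' ⊆ s)
    (ht : t' ⊆ t) : G.Anticomplete s' t' :=
  fun _ hx _ hy => h (hs hx) (ht hy)

lemma anticomplete_compl {s : Set V} (hs : ∀ x y, G.Adj x y → x ∈ s → y ∈ s) :
    G.Anticomplete s sᶜ :=
  fun x hx _ hy hxy => hy (hs x _ hxy hx)

lemma anticomplete_induce_iff {s : Set V} {A B : Set s} :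
    (G.induce s).Anticomplete A B ↔ G.Anticomplete (Subtype.val '' A) (Subtype.val '' B) :=
  ⟨fun h _ ⟨_, hx, hx'⟩ _ ⟨_, hy, hy'⟩ => hx' ▸ hy' ▸ h hx hy,
    fun h _ hx _ hy => h ⟨_, hx, rfl⟩ ⟨_, hy, rfl⟩⟩

lemma P4Free.induce (h : G.P4Free) (s : Set V) : (G.induce s).P4Free :=
  fun _ _ _ _ hab hbc hcd hac hbd had => h hab hbc hcd hac hbd had

lemma C4Free.induce (h : G.C4Free) (s : Set V) : (G.induce s).C4Free :=
  fun _ _ _ _ hab hbc hcd hda hac hbd =>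
    h hab hbc hcd hda (Subtype.val_injective.ne hac) (Subtype.val_injective.ne hbd)

lemma P3K2Free.induce (h : G.P3K2Free) (s : Set V) : (G.induce s).P3K2Free :=
  fun _ _ _ _ _ hab hbc hac hac' hde hA => h hab hbc (Subtype.val_injective.ne hac) hac' hde
    (by simpa [Set.image_insert_eq] using anticomplete_induce_iff.mp hA)

lemma ThreeK2Free.induce (h : G.ThreeK2Free) (s : Set V) : (G.induce s).ThreeK2Free :=
  fun _ _ _ _ _ _ hab hcd hef h₁ h₂ h₃ => h hab hcd hef
    (by simpa [Set.image_insert_eq] using anticomplete_induce_iff.mp h₁)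
    (by simpa [Set.image_insert_eq] using anticomplete_induce_iff.mp h₂)
    (by simpa [Set.image_insert_eq] using anticomplete_induce_iff.mp h₃)

end SimpleGraph

section SmallGraphs

variable {V : Type*} {G : SimpleGraph V}

lemma three_le_pseudoachromaticNumber [Finite V] (c : V → Fin 3)
    (h₀₁ : ∃ x y, G.Adj x y ∧ c x = 0 ∧ c y = 1)
    (h₀₂ : ∃ x y, G.Adj x y ∧ c x = 0 ∧ c y = 2)
    (h₁₂ : ∃ x y, G.Adj x y ∧ c x = 1 ∧ c y = 2) : 3 ≤ pseudoachromaticNumber G := by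
  have swap : ∀ {i j}, (∃ x y, G.Adj x y ∧ c x = i ∧ c y = j) →
      ∃ x y, G.Adj x y ∧ c x = j ∧ c y = i :=
    fun ⟨x, y, h, hx, hy⟩ => ⟨y, x, h.symm, hy, hx⟩
  obtain ⟨x₀, x₁, -, hx₀, hx₁⟩ := id h₀₁
  obtain ⟨-, x₂, -, -, hx₂⟩ := id h₀₂
  refine IsCompleteColoring.le_pseudoachromaticNumber (c := c) ⟨fun i => ?_, fun i j hij => ?_⟩
  · fin_cases i
    exacts [⟨x₀, hx₀⟩, ⟨x₁, hx₁⟩, ⟨x₂, hx₂⟩]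
  · fin_cases i <;> fin_cases j
    all_goals first
      | exact absurd rfl hij
      | exact h₀₁ | exact h₀₂ | exact h₁₂
      | exact swap h₀₁ | exact swap h₀₂ | exact swap h₁₂

lemma card_le_two_of_forall_eq_or_eq {k : ℕ} {i j : Fin k} (h : ∀ l, l = i ∨ l = j) :
    k ≤ 2 := by
  classical
  simpa using (Finset.card_le_card (s := Finset.univ) fun l _ => by simpa using h l).trans
    (Finset.card_le_two (a := i) (b := j))

lemma bChromaticNumber_le_two (p q : V)
    (h : ∀ x, x ≠ p → x ≠ q → ∃ w, ∀ y, G.Adj x y → y = w) :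
    bChromaticNumber G ≤ 2 := by
  refine csSup_le' ?_
  rintro k ⟨c, -, -, hdom⟩
  by_contra! hk
  -- a dominating vertex other than `p`, `q` sees a single colour, leaving at most two colours
  refine hk.not_ge (card_le_two_of_forall_eq_or_eq (i := c p) (j := c q) fun i => ?_)
  obtain ⟨x, rfl, hx⟩ := hdom i
  by_contra! hpq
  obtain ⟨w, hw⟩ := h x (by rintro rfl; exact hpq.1 rfl) (by rintro rfl; exact hpq.2 rfl)
  refine hk.not_ge (card_le_two_of_forall_eq_or_eq (i := c x) (j := c w) fun j => ?_)
  by_cases hj : j = c x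
  · exact .inl hj
  · obtain ⟨u, hxu, rfl⟩ := hx j hj
    exact .inr (congrArg c (hw u hxu))

lemma IsDominatingColoring.eq_of_cycle {k : ℕ} {f : V → Fin k} (hf : IsDominatingColoring G f)
    (hp : IsProperColoring G f) {a b c d : V} (hV : ∀ x, x = a ∨ x = b ∨ x = c ∨ x = d)
    (hab : G.Adj a b) (hbc : G.Adj b c) (hcd : G.Adj c d) (hda : G.Adj d a)
    (hac : ¬G.Adj a c) : f a = f c := by
  -- otherwise `a` is alone in its colour class and sees no vertex coloured `f c`
  by_contra hne
  obtain ⟨x, hx, hxdom⟩ := hf.2 (f a)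
  obtain rfl : x = a := by
    obtain rfl | rfl | rfl | rfl := hV x
    · rfl
    · exact absurd hx.symm (hp _ _ hab)
    · exact absurd hx.symm hne
    · exact absurd hx (hp _ _ hda)
  obtain ⟨u, hxu, hu⟩ := hxdom (f c) (Ne.symm hne)
  obtain rfl | rfl | rfl | rfl := hV u
  · exact G.irrefl hxu
  · exact hp _ _ hbc hu
  · exact hac hxu
  · exact hp _ _ hcd hu.symm

lemma bChromaticNumber_le_two_of_cycle {a b c d : V}
    (hV : ∀ x, x = a ∨ x = b ∨ x = c ∨ x = d)
    (hab : G.Adj a b) (hbc : G.Adj b c) (hcd : G.Adj c d) (hda : G.Adj d a)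
    (hac : ¬G.Adj a c) (hbd : ¬G.Adj b d) : bChromaticNumber G ≤ 2 := by
  refine csSup_le' ?_
  rintro k ⟨f, hp, hf⟩
  have hac' := hf.eq_of_cycle hp hV hab hbc hcd hda hac
  have hbd' := hf.eq_of_cycle hp (fun x => by have := hV x; tauto) hbc hcd hda hab hbd
  refine card_le_two_of_forall_eq_or_eq (i := f a) (j := f b) fun i => ?_
  obtain ⟨x, rfl⟩ := hf.1 i
  obtain rfl | rfl | rfl | rfl := hV x <;> simp [hac', hbd']

lemma bChromaticNumber_lt_pseudoachromaticNumber_of_path [Finite V] {a b c d : V}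
    (hV : ∀ x, x = a ∨ x = b ∨ x = c ∨ x = d) (hab : G.Adj a b) (hbc : G.Adj b c)
    (hcd : G.Adj c d) (hac : ¬G.Adj a c) (hbd : ¬G.Adj b d) (had : ¬G.Adj a d) :
    bChromaticNumber G < pseudoachromaticNumber G := by
  classical
  have hbd' : b ≠ d := by rintro rfl; exact had hab
  have hac' : a ≠ c := by rintro rfl; exact had hcd
  refine (bChromaticNumber_le_two b c fun x hxb hxc => ?_).trans_lt
    (three_le_pseudoachromaticNumber
      (fun x => if x = a ∨ x = d then 0 else if x = b then 1 else 2)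
      ⟨a, b, hab, by simp, by simp [hab.ne', hbd']⟩ ⟨d, c, hcd.symm, by simp,
        by simp [hac'.symm, hcd.ne, hbc.ne']⟩
      ⟨b, c, hbc, by simp [hab.ne', hbd'], by simp [hac'.symm, hcd.ne, hbc.ne']⟩)
  obtain rfl | rfl | rfl | rfl := hV x
  · refine ⟨b, fun y hy => ?_⟩
    obtain rfl | rfl | rfl | rfl := hV y <;> simp_all
  · exact absurd rfl hxb
  · exact absurd rfl hxc
  · refine ⟨c, fun y hy => ?_⟩
    obtain rfl | rfl | rfl | rfl := hV y <;> simp_all [G.adj_comm]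

lemma bChromaticNumber_lt_pseudoachromaticNumber_of_cycle [Finite V] {a b c d : V}
    (hV : ∀ x, x = a ∨ x = b ∨ x = c ∨ x = d) (hab : G.Adj a b) (hbc : G.Adj b c)
    (hcd : G.Adj c d) (hda : G.Adj d a) (hac : a ≠ c) (hbd : b ≠ d) (hac' : ¬G.Adj a c)
    (hbd' : ¬G.Adj b d) : bChromaticNumber G < pseudoachromaticNumber G := by
  classical
  exact (bChromaticNumber_le_two_of_cycle hV hab hbc hcd hda hac' hbd').trans_lt
    (three_le_pseudoachromaticNumber (fun x => if x = a then 0 else if x = d then 2 else 1)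
      ⟨a, b, hab, by simp, by simp [hab.ne', hbd]⟩
      ⟨a, d, hda.symm, by simp, by simp [hda.ne]⟩
      ⟨c, d, hcd, by simp [hac.symm, hcd.ne], by simp [hda.ne]⟩)

lemma bChromaticNumber_lt_pseudoachromaticNumber_of_threeK2 [Finite V] {a b c d e f : V}
    (hV : ∀ x, x = a ∨ x = b ∨ x = c ∨ x = d ∨ x = e ∨ x = f) (hab : G.Adj a b)
    (hcd : G.Adj c d) (hef : G.Adj e f) (h₁ : G.Anticomplete {a, b} {c, d})
    (h₂ : G.Anticomplete {a, b} {e, f}) (h₃ : G.Anticomplete {c, d} {e, f}) :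
    bChromaticNumber G < pseudoachromaticNumber G := by
  classical
  simp only [SimpleGraph.Anticomplete, Set.mem_insert_iff, Set.mem_singleton_iff,
    forall_eq_or_imp, forall_eq] at h₁ h₂ h₃
  refine (bChromaticNumber_le_two a a fun x _ _ => ?_).trans_lt
    (three_le_pseudoachromaticNumber
      (fun x => if x = a ∨ x = c then 0 else if x = d ∨ x = f then 2 else 1)
      ⟨a, b, hab, by simp, ?_⟩ ⟨c, d, hcd, by simp, ?_⟩ ⟨e, f, hef, ?_, ?_⟩)
  · obtain rfl | rfl | rfl | rfl | rfl | rfl := hV x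
    · refine ⟨b, fun y hy => ?_⟩
      obtain rfl | rfl | rfl | rfl | rfl | rfl := hV y <;> simp_all
    · refine ⟨a, fun y hy => ?_⟩
      obtain rfl | rfl | rfl | rfl | rfl | rfl := hV y <;> simp_all [G.adj_comm]
    · refine ⟨d, fun y hy => ?_⟩
      obtain rfl | rfl | rfl | rfl | rfl | rfl := hV y <;> simp_all [G.adj_comm]
    · refine ⟨c, fun y hy => ?_⟩
      obtain rfl | rfl | rfl | rfl | rfl | rfl := hV y <;> simp_all [G.adj_comm]
    · refine ⟨f, fun y hy => ?_⟩
      obtain rfl | rfl | rfl | rfl | rfl | rfl := hV y <;> simp_all [G.adj_comm]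
    · refine ⟨e, fun y hy => ?_⟩
      obtain rfl | rfl | rfl | rfl | rfl | rfl := hV y <;> simp_all [G.adj_comm]
  -- two vertices of different colours cannot coincide, by anticompleteness
  all_goals split_ifs with h h' <;> first
    | rfl
    | simp at h'
    | (obtain rfl | rfl := h <;> simp_all [G.adj_comm])
    | (obtain rfl | rfl := h' <;> simp_all)

lemma bChromaticNumber_lt_pseudoachromaticNumber_of_pathK2 [Finite V] {a b c d e : V}
    (hV : ∀ x, x = a ∨ x = b ∨ x = c ∨ x = d ∨ x = e) (hab : G.Adj a b) (hbc : G.Adj b c)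
    (hac : a ≠ c) (hac' : ¬G.Adj a c) (hde : G.Adj d e) (hA : G.Anticomplete {a, b, c} {d, e}) :
    bChromaticNumber G < pseudoachromaticNumber G := by
  classical
  simp only [SimpleGraph.Anticomplete, Set.mem_insert_iff, Set.mem_singleton_iff,
    forall_eq_or_imp, forall_eq] at hA
  refine (bChromaticNumber_le_two b b fun x hxb _ => ?_).trans_lt
    (three_le_pseudoachromaticNumber
      (fun x => if x = a ∨ x = d then 0 else if x = b then 1 else 2)
      ⟨a, b, hab, by simp, ?_⟩ ⟨d, e, hde, by simp, ?_⟩ ⟨b, c, hbc, ?_, ?_⟩)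
  · obtain rfl | rfl | rfl | rfl | rfl := hV x
    · refine ⟨b, fun y hy => ?_⟩
      obtain rfl | rfl | rfl | rfl | rfl := hV y <;> simp_all
    · exact absurd rfl hxb
    · refine ⟨b, fun y hy => ?_⟩
      obtain rfl | rfl | rfl | rfl | rfl := hV y <;> simp_all [G.adj_comm]
    · refine ⟨e, fun y hy => ?_⟩
      obtain rfl | rfl | rfl | rfl | rfl := hV y <;> simp_all [G.adj_comm]
    · refine ⟨d, fun y hy => ?_⟩
      obtain rfl | rfl | rfl | rfl | rfl := hV y <;> simp_all [G.adj_comm]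
  all_goals split_ifs with h h' <;> first
    | rfl
    | simp at h'
    | (obtain rfl | rfl := h <;> simp_all [G.adj_comm])
    | (subst h'; simp_all)

end SmallGraphs

namespace SimpleGraph

variable {V : Type*} [Finite V] {G : SimpleGraph V}

lemma p4Free_of_forall_bChromaticNumber_eq
    (h : ∀ s : Set V, bChromaticNumber (G.induce s) = pseudoachromaticNumber (G.induce s)) :
    G.P4Free := fun a b c d hab hbc hcd hac hbd had =>
  (bChromaticNumber_lt_pseudoachromaticNumber_of_path (G := G.induce {a, b, c, d})
    (a := ⟨a, by simp⟩) (b := ⟨b, by simp⟩) (c := ⟨c, by simp⟩) (d := ⟨d, by simp⟩)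
    (fun ⟨x, hx⟩ => by simpa using hx) hab hbc hcd hac hbd had).ne (h _)

lemma c4Free_of_forall_bChromaticNumber_eq
    (h : ∀ s : Set V, bChromaticNumber (G.induce s) = pseudoachromaticNumber (G.induce s)) :
    G.C4Free := fun a b c d hab hbc hcd hda hac hbd hac' hbd' =>
  (bChromaticNumber_lt_pseudoachromaticNumber_of_cycle (G := G.induce {a, b, c, d})
    (a := ⟨a, by simp⟩) (b := ⟨b, by simp⟩) (c := ⟨c, by simp⟩) (d := ⟨d, by simp⟩)
    (fun ⟨x, hx⟩ => by simpa using hx) hab hbc hcd hda (by simpa using hac) (by simpa using hbd)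
    hac' hbd').ne (h _)

lemma p3K2Free_of_forall_bChromaticNumber_eq
    (h : ∀ s : Set V, bChromaticNumber (G.induce s) = pseudoachromaticNumber (G.induce s)) :
    G.P3K2Free := fun a b c d e hab hbc hac hac' hde hA =>
  (bChromaticNumber_lt_pseudoachromaticNumber_of_pathK2 (G := G.induce {a, b, c, d, e})
    (a := ⟨a, by simp⟩) (b := ⟨b, by simp⟩) (c := ⟨c, by simp⟩) (d := ⟨d, by simp⟩)
    (e := ⟨e, by simp⟩) (fun ⟨x, hx⟩ => by simpa using hx) hab hbc (by simpa using hac) hac'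
    hde (anticomplete_induce_iff.mpr (by simpa [Set.image_insert_eq] using hA))).ne (h _)

lemma threeK2Free_of_forall_bChromaticNumber_eq
    (h : ∀ s : Set V, bChromaticNumber (G.induce s) = pseudoachromaticNumber (G.induce s)) :
    G.ThreeK2Free := fun a b c d e f hab hcd hef h₁ h₂ h₃ =>
  (bChromaticNumber_lt_pseudoachromaticNumber_of_threeK2 (G := G.induce {a, b, c, d, e, f})
    (a := ⟨a, by simp⟩) (b := ⟨b, by simp⟩) (c := ⟨c, by simp⟩) (d := ⟨d, by simp⟩)
    (e := ⟨e, by simp⟩) (f := ⟨f, by simp⟩) (fun ⟨x, hx⟩ => by simpa using hx)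
    hab hcd hef
    (anticomplete_induce_iff.mpr (by simpa [Set.image_insert_eq] using h₁))
    (anticomplete_induce_iff.mpr (by simpa [Set.image_insert_eq] using h₂))
    (anticomplete_induce_iff.mpr (by simpa [Set.image_insert_eq] using h₃))).ne (h _)

end SimpleGraph

section Structure

variable {V : Type*} {G : SimpleGraph V}

lemma pseudoachromaticNumber_le_induce_neighborSet_add_one [Finite V] {v : V}
    (hv : ∀ x y, G.Adj x y → x ∈ insert v (G.neighborSet v)) :
    pseudoachromaticNumber G ≤ pseudoachromaticNumber (G.induce (G.neighborSet v)) + 1 := by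
  classical
  obtain ⟨c, hc⟩ := exists_isCompleteColoring_pseudoachromaticNumber G
  rcases lt_or_ge (pseudoachromaticNumber G) 2 with hk | hk
  · omega
  have hN : ∀ x y, G.Adj x y → c x ≠ c v → x ∈ G.neighborSet v := fun x y hxy hx =>
    (hv x y hxy).resolve_left fun h => hx (congrArg c h)
  obtain ⟨j₀, hj₀⟩ := Fintype.exists_ne_of_one_lt_card (by simp; omega) (c v)
  -- drop the colour of `v`; neighbours of `v` wearing it are recoloured arbitrarily
  let c' : G.neighborSet v → {j // j ≠ c v} := fun x =>
    if h : c x = c v then ⟨j₀, hj₀⟩ else ⟨c x, h⟩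
  have hc' : ∀ (x : G.neighborSet v) (hx : c x ≠ c v), c' x = ⟨c x, hx⟩ :=
    fun _ hx => dif_neg hx
  have := card_le_pseudoachromaticNumber (G := G.induce (G.neighborSet v)) c' ?_ ?_
  · simp only [Fintype.card_subtype_compl, Fintype.card_fin, Fintype.card_unique] at this
    omega
  · rintro ⟨j, hj⟩
    obtain ⟨x, y, hxy, rfl, -⟩ := hc.2 j (c v) hj
    exact ⟨⟨x, hN x y hxy hj⟩, hc' _ hj⟩
  · rintro ⟨i, hi⟩ ⟨j, hj⟩ hij
    obtain ⟨x, y, hxy, rfl, rfl⟩ := hc.2 i j fun h => hij (Subtype.ext h)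
    exact ⟨⟨x, hN x y hxy hi⟩, ⟨y, hN y x hxy.symm hj⟩, hxy, hc' _ hi, hc' _ hj⟩

lemma cliqueNum_induce_neighborSet_add_one_le [Finite V] (v : V) :
    (G.induce (G.neighborSet v)).cliqueNum + 1 ≤ G.cliqueNum := by
  classical
  obtain ⟨t, ht⟩ := (G.induce (G.neighborSet v)).exists_isNClique_cliqueNum
  rw [isNClique_induce_iff] at ht
  have ht' := ht.insert (a := v) (by simp +contextual)
  exact ht'.card_eq ▸ IsClique.card_le_cliqueNum (tc := ht'.isClique)

lemma IsCompleteColoring.forall_exists_mem_or {k : ℕ} {c : V → Fin k}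
    (hc : IsCompleteColoring G c) (hk : 2 ≤ k) {X Y : Set V}
    (h : ∀ x y, G.Adj x y → x ∈ X ∧ y ∈ X ∨ x ∈ Y ∧ y ∈ Y) :
    (∀ i, ∃ x ∈ X, c x = i) ∨ ∀ i, ∃ y ∈ Y, c y = i := by
  by_contra! ⟨⟨i, hi⟩, ⟨j, hj⟩⟩
  obtain ⟨i', hi'⟩ := Fintype.exists_ne_of_one_lt_card (by simp; omega) i
  obtain ⟨x, x', hxx', hx, -⟩ := hc.2 i i' hi'.symm
  have hxY : x ∈ Y := by
    rcases h x x' hxx' with ⟨hxX, -⟩ | ⟨hxY, -⟩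
    · exact absurd hx (hi x hxX)
    · exact hxY
  obtain ⟨u, w, huw, hu, hw⟩ := hc.2 i j fun e => hj x hxY (hx.trans e)
  rcases h u w huw with ⟨huX, -⟩ | ⟨-, hwY⟩
  · exact hi u huX hu
  · exact hj w hwY hw

lemma le_cliqueNum_of_isClique [Finite V] {X : Set V} (hX : G.IsClique X) {k : ℕ}
    {c : V → Fin k} (h : ∀ i, ∃ x ∈ X, c x = i) : k ≤ G.cliqueNum := by
  classical
  choose f hfX hfc using h
  have hf : Function.Injective f := fun i j hij => by rw [← hfc i, ← hfc j, hij]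
  simpa [Finset.card_image_of_injective _ hf] using
    IsClique.card_le_cliqueNum (t := Finset.univ.image f)
      (tc := hX.subset (by simpa [Set.subset_def] using hfX))

lemma pseudoachromaticNumber_le_cliqueNum_of_two_cliques [Finite V] {X Y : Set V}
    (hX : G.IsClique X) (hY : G.IsClique Y)
    (h : ∀ x y, G.Adj x y → x ∈ X ∧ y ∈ X ∨ x ∈ Y ∧ y ∈ Y) :
    pseudoachromaticNumber G ≤ G.cliqueNum := by
  rcases lt_or_ge (pseudoachromaticNumber G) 2 with hk | hk
  · exact pseudoachromaticNumber_le_cliqueNum_of_lt_two hk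
  obtain ⟨c, hc⟩ := exists_isCompleteColoring_pseudoachromaticNumber G
  rcases hc.forall_exists_mem_or hk h with hXc | hYc
  exacts [le_cliqueNum_of_isClique hX hXc, le_cliqueNum_of_isClique hY hYc]

end Structure

namespace SimpleGraph

variable {V : Type*} {G : SimpleGraph V}

lemma P4Free.adj_of_adj_of_forall_degree_le [Fintype V] [DecidableRel G.Adj] (h4 : G.P4Free)
    (hc4 : G.C4Free) {v u w : V} (hv : ∀ x, G.degree x ≤ G.degree v) (hvu : G.Adj v u)
    (huw : G.Adj u w) (hwv : w ≠ v) : G.Adj v w := by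
  classical
  by_contra hvw
  -- otherwise `u` is adjacent to `v`, `w` and all other neighbours of `v`, so `deg u > deg v`
  have hN : ∀ x, G.Adj v x → x ≠ u → G.Adj u x := by
    intro x hvx hxu
    by_contra hux
    by_cases hxw : G.Adj x w
    · exact hc4 hvx.symm hvu huw hxw.symm hxu hwv.symm (fun h => hux h.symm) hvw
    · exact h4 hvx.symm hvu huw (fun h => hux h.symm) hvw hxw
  have hsub : insert v (insert w ((G.neighborFinset v).erase u)) ⊆ G.neighborFinset u := by
    intro x hx
    simp only [Finset.mem_insert, Finset.mem_erase, mem_neighborFinset] at hx ⊢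
    rcases hx with rfl | rfl | ⟨hxu, hvx⟩
    · exact hvu.symm
    · exact huw
    · exact hN x hvx hxu
  have hcard := Finset.card_le_card hsub
  rw [Finset.card_insert_of_notMem (by simp [hwv.symm]),
    Finset.card_insert_of_notMem (by simp [hvw]),
    Finset.card_erase_of_mem (by simpa using hvu), card_neighborFinset_eq_degree,
    card_neighborFinset_eq_degree] at hcard
  have := (G.degree_pos_iff_exists_adj v).mpr ⟨u, hvu⟩
  have := hv u
  omega

lemma P4Free.insert_neighborSet_closed [Fintype V] [DecidableRel G.Adj] (h4 : G.P4Free)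
    (hc4 : G.C4Free) {v : V} (hv : ∀ x, G.degree x ≤ G.degree v) (x y : V) (hxy : G.Adj x y)
    (hx : x ∈ insert v (G.neighborSet v)) : y ∈ insert v (G.neighborSet v) := by
  rcases hx with rfl | hvx
  · exact .inr hxy
  · by_cases hyv : y = v
    · exact .inl hyv
    · exact .inr (h4.adj_of_adj_of_forall_degree_le hc4 hv hvx hxy hyv)

lemma P3K2Free.eq_or_adj (h : G.P3K2Free) {X : Set V}
    (hX : ∀ x y, G.Adj x y → x ∈ X → y ∈ X)
    {d e : V} (hde : G.Adj d e) (hd : d ∉ X) {x y z : V} (hx : x ∈ X) (hxy : G.Adj x y)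
    (hyz : G.Adj y z) : x = z ∨ G.Adj x z := by
  by_contra! ⟨hxz, hxz'⟩
  have hy := hX x y hxy hx
  have hz := hX y z hyz hy
  have he : e ∉ X := fun he => hd (hX e d hde.symm he)
  exact h hxy hyz hxz hxz' hde <| (anticomplete_compl hX).mono
    (by simp [Set.insert_subset_iff, hx, hy, hz]) (by simp [Set.insert_subset_iff, hd, he])

lemma isClique_insert_neighborSet {v : V}
    (h : ∀ x z, G.Adj v x → G.Adj v z → x = z ∨ G.Adj x z) :
    G.IsClique (insert v (G.neighborSet v)) :=
  isClique_insert.mpr ⟨fun x hx z hz hxz => (h x z hx hz).resolve_left hxz, fun _ hx _ => hx⟩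

lemma ThreeK2Free.mem_insert_neighborSet (h : G.ThreeK2Free) {X : Set V}
    (hX : ∀ x y, G.Adj x y → x ∈ X → y ∈ X) {a b : V} (hab : G.Adj a b) (ha : a ∈ X)
    (htrans : ∀ x y z, x ∉ X → G.Adj x y → G.Adj y z → x = z ∨ G.Adj x z)
    {d e : V} (hde : G.Adj d e) (hd : d ∉ X) {x y : V} (hxy : G.Adj x y) (hx : x ∉ X) :
    x ∈ insert d (G.neighborSet d) := by
  by_contra hxd
  simp only [Set.mem_insert_iff, mem_neighborSet, not_or] at hxd
  obtain ⟨hxd, hdx⟩ := hxd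
  have hnot : ∀ {z}, G.Adj d z → z ∉ X := fun {z} hdz hz => hd (hX z d hdz.symm hz)
  have hy : y ∉ X := fun hy => hx (hX y x hxy.symm hy)
  have hdy : ¬G.Adj d y := fun hdy => (htrans d y x hd hdy hxy.symm).elim (hxd ·.symm) hdx
  have hex : ¬G.Adj e x := fun hex => (htrans d e x hd hde hex).elim (hxd ·.symm) hdx
  have hey : ¬G.Adj e y := fun hey => (htrans d e y hd hde hey).elim
    (fun hdy' => hdx (hdy' ▸ hxy.symm)) hdy
  have hXc := anticomplete_compl hX
  have hb := hX a b hab ha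
  -- the edges `ab`, `de`, `xy` now induce 3K₂
  exact h hab hde hxy
    (hXc.mono (by simp [Set.insert_subset_iff, ha, hb])
      (by simp [Set.insert_subset_iff, hd, hnot hde]))
    (hXc.mono (by simp [Set.insert_subset_iff, ha, hb]) (by simp [Set.insert_subset_iff, hx, hy]))
    (by simp [Anticomplete, hdx, hdy, hex, hey])

lemma pseudoachromaticNumber_le_cliqueNum_of_adj_outside [Finite V] (hp : G.P3K2Free)
    (h3 : G.ThreeK2Free) {v u d e : V}
    (hv : ∀ x y, G.Adj x y → x ∈ insert v (G.neighborSet v) →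
      y ∈ insert v (G.neighborSet v))
    (hvu : G.Adj v u) (hde : G.Adj d e) (hd : d ∉ insert v (G.neighborSet v)) :
    pseudoachromaticNumber G ≤ G.cliqueNum := by
  set X := insert v (G.neighborSet v)
  have hvX : v ∈ X := Set.mem_insert _ _
  have hXc : ∀ x y, G.Adj x y → x ∈ Xᶜ → y ∈ Xᶜ :=
    fun x y hxy hx hy => hx (hv y x hxy.symm hy)
  have htrans : ∀ x y z, x ∉ X → G.Adj x y → G.Adj y z → x = z ∨ G.Adj x z :=
    fun _ _ _ hx => hp.eq_or_adj hXc hvu (by simpa using hvX) hx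
  have hY : ∀ x y, G.Adj x y → x ∉ X → x ∈ insert d (G.neighborSet d) :=
    fun _ _ hxy hx => h3.mem_insert_neighborSet hv hvu hvX htrans hde hd hxy hx
  refine pseudoachromaticNumber_le_cliqueNum_of_two_cliques
    (isClique_insert_neighborSet fun x z hx hz => hp.eq_or_adj hv hde hd (.inr hx) hx.symm hz)
    (isClique_insert_neighborSet fun x z hx hz => htrans x d z (hXc d x hx hd) hx.symm hz)
    fun x y hxy => ?_
  by_cases hx : x ∈ X
  · exact .inl ⟨hx, hv x y hxy hx⟩
  · exact .inr ⟨hY x y hxy hx, hY y x hxy.symm (hXc x y hxy hx)⟩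

theorem pseudoachromaticNumber_le_cliqueNum [Finite V] (h4 : G.P4Free) (hc4 : G.C4Free)
    (hp : G.P3K2Free) (h3 : G.ThreeK2Free) : pseudoachromaticNumber G ≤ G.cliqueNum := by
  induction hn : Nat.card V using Nat.strong_induction_on generalizing V with
  | _ n ih =>
  classical
  have := Fintype.ofFinite V
  rcases lt_or_ge (pseudoachromaticNumber G) 2 with hk | hk
  · exact pseudoachromaticNumber_le_cliqueNum_of_lt_two hk
  obtain ⟨c, hc⟩ := exists_isCompleteColoring_pseudoachromaticNumber G
  obtain ⟨x, -⟩ := hc.1 ⟨0, by omega⟩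
  obtain ⟨v, -, hv⟩ :=
    Finset.exists_max_image Finset.univ (G.degree ·) ⟨x, Finset.mem_univ x⟩
  replace hv : ∀ x, G.degree x ≤ G.degree v := fun x => hv x (Finset.mem_univ x)
  by_cases hout : ∃ d e, G.Adj d e ∧ d ∉ insert v (G.neighborSet v)
  · obtain ⟨d, e, hde, hd⟩ := hout
    obtain ⟨u, hvu⟩ := (G.degree_pos_iff_exists_adj v).mp
      (((G.degree_pos_iff_exists_adj d).mpr ⟨e, hde⟩).trans_le (hv d))
    exact pseudoachromaticNumber_le_cliqueNum_of_adj_outside hp h3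
      (h4.insert_neighborSet_closed hc4 hv) hvu hde hd
  push Not at hout
  have hlt : Nat.card (G.neighborSet v) < n := hn ▸ Finite.card_subtype_lt (G.irrefl (v := v))
  calc pseudoachromaticNumber G
      ≤ pseudoachromaticNumber (G.induce (G.neighborSet v)) + 1 :=
        pseudoachromaticNumber_le_induce_neighborSet_add_one hout
    _ ≤ (G.induce (G.neighborSet v)).cliqueNum + 1 := by
        gcongr
        exact ih _ hlt (h4.induce _) (hc4.induce _) (hp.induce _) (h3.induce _) rfl
    _ ≤ G.cliqueNum := cliqueNum_induce_neighborSet_add_one_le v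

end SimpleGraph

/-- `G` is ωψ-perfect iff `G` is bψ-perfect. -/
theorem omega_pseudoachromatic_perfect_iff_b_pseudoachromatic_perfect
    {V : Type*} [Fintype V] (G : SimpleGraph V) :
    (∀ s : Set V, (G.induce s).cliqueNum = pseudoachromaticNumber (G.induce s)) ↔
      (∀ s : Set V, bChromaticNumber (G.induce s) = pseudoachromaticNumber (G.induce s)) := by
  refine ⟨fun h s => ?_, fun h s => ?_⟩
  · exact (bChromaticNumber_le_pseudoachromaticNumber _).antisymm
      (h s ▸ cliqueNum_le_bChromaticNumber _)
  · exact (cliqueNum_le_pseudoachromaticNumber _).antisymm <|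
      pseudoachromaticNumber_le_cliqueNum
        ((p4Free_of_forall_bChromaticNumber_eq h).induce s)
        ((c4Free_of_forall_bChromaticNumber_eq h).induce s)
        ((p3K2Free_of_forall_bChromaticNumber_eq h).induce s)
        ((threeK2Free_of_forall_bChromaticNumber_eq h).induce s)
end
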